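/- arXiv:2407.12212 — 4 statements merged into one kernel-verified Lean document; each statement's English description precedes it below -/
import Mathlib

section
/- Let X be a metric space, μ a probability measure on X, f : X → Y a measurable deterministic labeling function, L ⊆ X a finite nonempty labeled set, nn : X → L a nearest-neighbor selector (dist(x, nn(x)) ≤ dist(x, x') for all x' ∈ L), and f̂ = f ∘ nn the 1-NN classifier. For δ > 0, assuming the relevant sets are μ-measurable, μ({x : f(x) ≠ f̂(x)}) ≤ (1 − μ({x : ∃ x' ∈ L, dist(x, x') ≤ δ})) + (1 − μ({x : ∀ x' with dist(x, x') ≤ δ, f(x') = f(x)})), i.e. the 1-NN error is at most (1 − coverage) + (1 − purity). -/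
open MeasureTheory

/-! A point that is covered and pure is classified correctly, because its nearest labelled point
is within `δ` of it and hence carries its label. So the error set lies in the union of the
complements of the coverage and purity sets, and the bound is subadditivity of `μ`. -/

theorem apply_nn_eq_of_covered_of_pure {X Y : Type*} [PseudoMetricSpace X] {f : X → Y}
    {L : Set X} {nn : X → X} (hnn_near : ∀ x, ∀ x' ∈ L, dist x (nn x) ≤ dist x x')
    {δ : ℝ} {x : X} (hcov : ∃ x' ∈ L, dist x x' ≤ δ)
    (hpur : ∀ x', dist x x' ≤ δ → f x' = f x) :
    f (nn x) = f x := by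
  obtain ⟨x', hx'L, hx'δ⟩ := hcov
  exact hpur (nn x) ((hnn_near x x' hx'L).trans hx'δ)

theorem measureReal_le_one_sub_add_one_sub {α : Type*} [MeasurableSpace α] {μ : Measure α}
    [IsProbabilityMeasure μ] {s t u : Set α} (ht : MeasurableSet t) (hu : MeasurableSet u)
    (hs : s ⊆ tᶜ ∪ uᶜ) :
    μ.real s ≤ (1 - μ.real t) + (1 - μ.real u) :=
  calc μ.real s ≤ μ.real (tᶜ ∪ uᶜ) := measureReal_mono hs
    _ ≤ μ.real tᶜ + μ.real uᶜ := measureReal_union_le _ _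
    _ = (1 - μ.real t) + (1 - μ.real u) := by
      rw [probReal_compl_eq_one_sub ht, probReal_compl_eq_one_sub hu]

theorem probcover_bound_general
    {X Y : Type*} [MetricSpace X] [MeasurableSpace X]
    (μ : Measure X) [IsProbabilityMeasure μ]
    (f : X → Y)
    (L : Finset X)
    (nn : X → X)
    (hnn_near : ∀ x, ∀ x' ∈ L, dist x (nn x) ≤ dist x x')
    (δ : ℝ)
    (hcov : MeasurableSet {x | ∃ x' ∈ L, dist x x' ≤ δ})
    (hpur : MeasurableSet {x | ∀ x', dist x x' ≤ δ → f x' = f x}) :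
    (μ {x | f x ≠ f (nn x)}).toReal ≤
      (1 - (μ {x | ∃ x' ∈ L, dist x x' ≤ δ}).toReal)
        + (1 - (μ {x | ∀ x', dist x x' ≤ δ → f x' = f x}).toReal) := by
  refine measureReal_le_one_sub_add_one_sub hcov hpur fun x hx => not_and_or.mp ?_
  exact fun ⟨hx_cov, hx_pur⟩ => hx (apply_nn_eq_of_covered_of_pure hnn_near hx_cov hx_pur).symm

/-- ProbCover's bound (equation (1) of the paper): the 1-NN error is at most
`(1 - coverage) + (1 - purity)`. -/
theorem probcover_bound
    {X Y : Type*} [MetricSpace X] [MeasurableSpace X]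
    (μ : Measure X) [IsProbabilityMeasure μ]
    (f : X → Y)
    (L : Finset X) (hL : L.Nonempty)
    (nn : X → X) (hnn_mem : ∀ x, nn x ∈ L)
    (hnn_near : ∀ x, ∀ x' ∈ L, dist x (nn x) ≤ dist x x')
    (δ : ℝ) (hδ : 0 < δ)
    (herr : MeasurableSet {x | f x ≠ f (nn x)})
    (hcov : MeasurableSet {x | ∃ x' ∈ L, dist x x' ≤ δ})
    (hpur : MeasurableSet {x | ∀ x', dist x x' ≤ δ → f x' = f x}) :
    (μ {x | f x ≠ f (nn x)}).toReal ≤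
      (1 - (μ {x | ∃ x' ∈ L, dist x x' ≤ δ}).toReal)
        + (1 - (μ {x | ∀ x', dist x x' ≤ δ → f x' = f x}).toReal) :=
  probcover_bound_general μ f L nn hnn_near δ hcov hpur
end

section
/- Let X be a set and k : X × X → ℝ a function with k(x, x) ≥ k(x, x') for all x, x' ∈ X. Let x₁, …, x_N ∈ X be data points, let L = {x̃₁, …, x̃_ℓ} ⊆ X be a finite nonempty labeled set, and define the max kernel function k(x, x̃; L) := max( k(x, x̃) − max_{x' ∈ L} k(x, x'), 0 ). Then for every x̃ ∈ X, (1/N) Σ_{n=1}^N max_{x' ∈ L ∪ {x̃}} k(x_n, x') − (1/N) Σ_{n=1}^N max_{x' ∈ L} k(x_n, x') = (1/N) Σ_{n=1}^N k(x_n, x̃; L) − (1/(ℓ+1)) Σ_{l=1}^{ℓ} k(x̃_l, x̃; L). Consequently the MaxHerding marginal-gain objective coincides with the kernel herding objective (reward minus penalty) computed with the max kernel function. -/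
/-- Paper's Proposition 3: the MaxHerding marginal gain equals the kernel herding
objective (reward minus penalty) computed with the max kernel function
`k(x, xt; L) = max(k(x, xt) - max_{x'∈L} k(x, x'), 0)`. -/
theorem maxherding_eq_kernel_herding_with_max_kernel
    {X : Type*} [DecidableEq X]
    (k : X → X → ℝ) (hk_self : ∀ x x', k x x' ≤ k x x)
    (N : ℕ) (xs : Fin N → X)
    (ℓ : ℕ) (ys : Fin ℓ → X)
    (L : Finset X) (hLdef : L = Finset.univ.image ys) (hL : L.Nonempty)
    (xt : X) :
    (∑ n, (insert xt L).sup' (Finset.insert_nonempty xt L) (k (xs n))) / N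
        - (∑ n, L.sup' hL (k (xs n))) / N
      = (∑ n, max (k (xs n) xt - L.sup' hL (k (xs n))) 0) / N
        - (∑ l, max (k (ys l) xt - L.sup' hL (k (ys l))) 0) / (ℓ + 1) := by
  have hpen : ∀ l : Fin ℓ, max (k (ys l) xt - L.sup' hL (k (ys l))) 0 = 0 := by
    intro l
    have hmem : ys l ∈ L := by
      rw [hLdef]; exact Finset.mem_image_of_mem ys (Finset.mem_univ l)
    have h1 : k (ys l) xt ≤ L.sup' hL (k (ys l)) :=
      le_trans (hk_self (ys l) xt) (Finset.le_sup' (k (ys l)) hmem)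
    simp [max_eq_right, sub_nonpos.mpr h1]
  have hpen0 : (∑ l, max (k (ys l) xt - L.sup' hL (k (ys l))) 0) = 0 := by
    simp [hpen]
  rw [hpen0]
  have hsup : ∀ n, (insert xt L).sup' (Finset.insert_nonempty xt L) (k (xs n))
      = max (k (xs n) xt) (L.sup' hL (k (xs n))) := by
    intro n
    exact Finset.sup'_insert hL (k (xs n))
  have hterm : ∀ n, (insert xt L).sup' (Finset.insert_nonempty xt L) (k (xs n))
      - L.sup' hL (k (xs n)) = max (k (xs n) xt - L.sup' hL (k (xs n))) 0 := by
    intro n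
    rw [hsup n]
    rcases le_total (k (xs n) xt) (L.sup' hL (k (xs n))) with h | h
    · rw [max_eq_right h, max_eq_right (sub_nonpos.mpr h)]; ring
    · rw [max_eq_left h, max_eq_left (sub_nonneg.mpr h)]
  rw [div_sub_div_same, ← Finset.sum_sub_distrib]
  simp [hterm]
end

section
/- Let X be a metric space, δ > 0, and let k be the top-hat function: k(x, x') = 1 if dist(x, x') ≤ δ and 0 otherwise. Let x₁, …, x_N ∈ X be data points and L ⊆ X a finite nonempty labeled set. Then for every candidate x̃ ∈ X, the MaxHerding marginal gain (1/N) Σ_{n=1}^N ( max_{x' ∈ L ∪ {x̃}} k(x_n, x') − max_{x' ∈ L} k(x_n, x') ) equals (1/N) · |{ n : dist(x_n, x̃) ≤ δ and dist(x_n, x') > δ for all x' ∈ L }|, i.e. the fraction of data points newly covered by a δ-ball around x̃. Hence MaxHerding with the top-hat function selects, at each step, a point covering the largest number of not-yet-covered data points, which is exactly the ProbCover selection rule. -/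
open scoped Classical

lemma sup'_indicator {X : Type*} (s : Finset X) (hs : s.Nonempty) (p : X → Prop)
    [DecidablePred p] :
    s.sup' hs (fun x => if p x then (1 : ℝ) else 0)
      = if ∃ x ∈ s, p x then 1 else 0 := by
  by_cases h : ∃ x ∈ s, p x
  · obtain ⟨x, hx, hpx⟩ := h
    rw [if_pos ⟨x, hx, hpx⟩]
    apply le_antisymm
    · exact Finset.sup'_le _ _ fun b _ => by split <;> norm_num
    · exact le_trans (by rw [if_pos hpx]) (Finset.le_sup' _ hx)
  · rw [if_neg h]
    push_neg at h
    apply le_antisymm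
    · exact Finset.sup'_le _ _ fun b hb => by rw [if_neg (h b hb)]
    · obtain ⟨x, hx⟩ := hs
      exact le_trans (by rw [if_neg (h x hx)]) (Finset.le_sup' _ hx)

/-- Paper's Corollary 2: with the top-hat function of radius δ, the MaxHerding
marginal gain of a candidate `xt` equals the fraction of data points newly covered
by the δ-ball around `xt` — i.e. the ProbCover selection rule. -/
theorem maxherding_tophat_is_probcover
    {X : Type*} [MetricSpace X] [DecidableEq X]
    (δ : ℝ) (hδ : 0 < δ)
    (N : ℕ) (xs : Fin N → X)
    (L : Finset X) (hL : L.Nonempty)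
    (xt : X) :
    (∑ n, ((insert xt L).sup' (Finset.insert_nonempty xt L)
              (fun x' => if dist (xs n) x' ≤ δ then (1 : ℝ) else 0)
            - L.sup' hL (fun x' => if dist (xs n) x' ≤ δ then (1 : ℝ) else 0))) / N
      = ((Finset.univ.filter
            (fun n => dist (xs n) xt ≤ δ ∧ ∀ x' ∈ L, δ < dist (xs n) x')).card : ℝ) / N := by
  congr 1
  rw [Finset.card_filter, Nat.cast_sum]
  apply Finset.sum_congr rfl
  intro n _
  rw [sup'_indicator, sup'_indicator]
  by_cases h1 : dist (xs n) xt ≤ δ ∧ ∀ x' ∈ L, δ < dist (xs n) x'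
  · obtain ⟨ha, hb⟩ := h1
    rw [if_pos ⟨xt, Finset.mem_insert_self _ _, ha⟩,
      if_neg (by push_neg; intro x hx; exact (hb x hx)), if_pos ⟨ha, hb⟩]
    norm_num
  · rw [if_neg h1]
    push_neg at h1
    by_cases ha : dist (xs n) xt ≤ δ
    · obtain ⟨x', hx', hd⟩ := h1 ha
      rw [if_pos ⟨x', Finset.mem_insert_of_mem hx', hd⟩, if_pos ⟨x', hx', hd⟩]
      norm_num
    · have : ∀ x ∈ insert xt L, dist (xs n) x ≤ δ ↔ x ∈ L ∧ dist (xs n) x ≤ δ := by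
        intro x hx
        rcases Finset.mem_insert.mp hx with rfl | hx
        · exact ⟨fun h => absurd h ha, fun h => h.2⟩
        · exact ⟨fun h => ⟨hx, h⟩, fun h => h.2⟩
      by_cases hb : ∃ x ∈ L, dist (xs n) x ≤ δ
      · obtain ⟨x, hx, hd⟩ := hb
        rw [if_pos ⟨x, Finset.mem_insert_of_mem hx, hd⟩, if_pos ⟨x, hx, hd⟩]
        norm_num
      · push_neg at hb
        have hB : ¬ ∃ x ∈ L, dist (xs n) x ≤ δ := by
          rintro ⟨x, hx, hd⟩; exact absurd hd (not_le.mpr (hb x hx))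
        have hA : ¬ ∃ x ∈ insert xt L, dist (xs n) x ≤ δ := by
          rintro ⟨x, hx, hd⟩
          rcases Finset.mem_insert.mp hx with rfl | hx
          · exact ha hd
          · exact absurd hd (not_le.mpr (hb x hx))
        rw [if_neg hA, if_neg hB, sub_self]; norm_num
end

section
/- Let X be a metric space, f : X → Y a labeling function, L ⊆ X a finite nonempty set, nn : X → L a nearest-neighbor selector (dist(x, nn(x)) ≤ dist(x, x') for all x' ∈ L), and f̂ = f ∘ nn. Let k : X × X → ℝ be nonnegative with the property that dist(x₁, x) ≤ dist(x₂, x) implies k(x, x₁) ≥ k(x, x₂). Then for every x ∈ X with f(x) ≠ f̂(x), max_{x' ∈ L} k(x, x') ≤ sup_{x' ∈ X : f(x') ≠ f(x)} k(x, x'). -/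
/-- Key pointwise lemma of the paper's Theorem 1: if the 1-NN classifier
misclassifies `x`, then `max_{x'∈L} k(x,x')` is at most the sup of `k(x,·)` over
differently-labeled points. -/
theorem misclassified_max_le_impurity_sup
    {X Y : Type*} [MetricSpace X]
    (f : X → Y)
    (L : Finset X) (hL : L.Nonempty)
    (nn : X → X) (hnn_mem : ∀ x, nn x ∈ L)
    (hnn_near : ∀ x, ∀ x' ∈ L, dist x (nn x) ≤ dist x x')
    (k : X → X → ℝ)
    (hk_nonneg : ∀ x x', 0 ≤ k x x')
    (hk_mono : ∀ x x₁ x₂, dist x₁ x ≤ dist x₂ x → k x x₂ ≤ k x x₁)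
    (x : X) (hbdd : BddAbove (k x '' {x' | f x' ≠ f x}))
    (hx : f x ≠ f (nn x)) :
    L.sup' hL (k x) ≤ ⨆ x' ∈ {x' | f x' ≠ f x}, k x x' := by
  have h1 : L.sup' hL (k x) ≤ k x (nn x) := by
    apply Finset.sup'_le
    intro b hb
    exact hk_mono x (nn x) b (by simpa [dist_comm] using hnn_near x b hb)
  refine h1.trans ?_
  obtain ⟨B, hB⟩ := hbdd
  have hbdd' : BddAbove (Set.range fun x' => ⨆ _ : x' ∈ {x' | f x' ≠ f x}, k x x') := by
    refine ⟨max B 0, ?_⟩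
    rintro _ ⟨y, rfl⟩
    by_cases hy : y ∈ {x' | f x' ≠ f x}
    · simp only []
      rw [ciSup_pos hy]
      exact le_max_of_le_left (hB ⟨y, hy, rfl⟩)
    · simp [hy, Real.iSup_of_isEmpty]
  refine le_ciSup_of_le hbdd' (nn x) ?_
  rw [ciSup_pos (show nn x ∈ {x' | f x' ≠ f x} from hx.symm)]
end
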